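/- arXiv:2408.09976 — 4 statements merged into one kernel-verified Lean document; each statement's English description precedes it below -/
import Mathlib

section
/- Let Ω : ℝ^q × ℝ^p → ℝ be twice continuously differentiable, Ψ : ℝ^p → ℝ be differentiable, and w* : ℝ^q → ℝ^p be a differentiable map such that for every θ ∈ ℝ^q the partial gradient ∇_w Ω(θ, w) vanishes at w = w*(θ). Fix θ₀ ∈ ℝ^q and suppose the Hessian matrix H = ∂²Ω/∂w∂wᵀ evaluated at (θ₀, w*(θ₀)) is invertible. Then the gradient of the composite function L(θ) = Ψ(w*(θ)) at θ₀ is given by ∇L(θ₀) = −(∂²Ω/∂θ∂wᵀ)(θ₀, w*(θ₀)) · H⁻¹ · ∇Ψ(w*(θ₀)), where ∂²Ω/∂θ∂wᵀ denotes the q × p matrix of mixed second partial derivatives. -/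
section AuxGrad

variable {G E' : Type*} [NormedAddCommGroup G] [NormedSpace ℝ G]
  [NormedAddCommGroup E'] [NormedSpace ℝ E']

lemma aux_chain (Ω : E' → ℝ) (hΩd : Differentiable ℝ Ω)
    (γ : G → E') {γ' : G →L[ℝ] E'} {x : G} (hγ : HasFDerivAt γ γ' x) (v : G) :
    fderiv ℝ (fun t => Ω (γ t)) x v = fderiv ℝ Ω (γ x) (γ' v) := by
  rw [show (fun t => Ω (γ t)) = Ω ∘ γ from rfl,
    ((hΩd (γ x)).hasFDerivAt.comp x hγ).fderiv]; rfl

lemma aux_fderiv_apply (Ω : E' → ℝ) (hΩ : ContDiff ℝ 2 Ω)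
    (γ : G → E') {γ' : G →L[ℝ] E'} {x : G} (hγ : HasFDerivAt γ γ' x)
    (u : E') (v : G) :
    fderiv ℝ (fun t => fderiv ℝ Ω (γ t) u) x v
      = fderiv ℝ (fderiv ℝ Ω) (γ x) (γ' v) u := by
  have h1 : ContDiff ℝ 1 (fderiv ℝ Ω) := hΩ.fderiv_right (le_refl 2)
  have h2 : HasFDerivAt (fderiv ℝ Ω) (fderiv ℝ (fderiv ℝ Ω) (γ x)) (γ x) :=
    (h1.differentiable one_ne_zero (γ x)).hasFDerivAt
  have h3 := (ContinuousLinearMap.apply ℝ ℝ u).hasFDerivAt.comp x (h2.comp x hγ)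
  rw [show (fun t => fderiv ℝ Ω (γ t) u)
      = ⇑(ContinuousLinearMap.apply ℝ ℝ u) ∘ fderiv ℝ Ω ∘ γ from rfl, h3.fderiv]
  rfl

lemma aux_pi_expand {n : ℕ} (b : Fin n → ℝ) :
    b = ∑ k, b k • (Pi.single k 1 : Fin n → ℝ) := by
  funext j
  simp [Pi.single_apply, Finset.sum_apply]

end AuxGrad

/-- paper's Theorem 1: let `Ω : ℝ^q × ℝ^p → ℝ` be `C²`,
`Ψ : ℝ^p → ℝ` differentiable, and `w* : ℝ^q → ℝ^p` a differentiable map such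
that for every `θ` the partial gradient `∇_w Ω(θ, ·)` vanishes at `w*(θ)`.
If the Hessian `H = ∂²Ω/∂w∂wᵀ` at `(θ₀, w*(θ₀))` is invertible, then the
gradient of `L(θ) = Ψ(w*(θ))` at `θ₀` is
`∇L(θ₀) = −(∂²Ω/∂θ∂wᵀ)(θ₀, w*(θ₀)) ⬝ H⁻¹ ⬝ ∇Ψ(w*(θ₀))`,
where `∂²Ω/∂θ∂wᵀ` is the `q × p` matrix of mixed second partials.
Gradients and matrices of (second) partial derivatives are encoded entrywise
via iterated `fderiv` along the standard basis vectors `Pi.single j 1`. -/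
theorem gradient_of_outer_loss_at_stationary_point
    (q p : ℕ)
    (Ω : (Fin q → ℝ) × (Fin p → ℝ) → ℝ)
    (hΩ : ContDiff ℝ 2 Ω)
    (Ψ : (Fin p → ℝ) → ℝ)
    (hΨ : Differentiable ℝ Ψ)
    (wstar : (Fin q → ℝ) → (Fin p → ℝ))
    (hwstar : Differentiable ℝ wstar)
    -- stationarity: the partial gradient in `w` vanishes at `w*(θ)` for every `θ`
    (hstat : ∀ θ : Fin q → ℝ, fderiv ℝ (fun w => Ω (θ, w)) (wstar θ) = 0)
    (θ₀ : Fin q → ℝ)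
    -- the Hessian `∂²Ω/∂w∂wᵀ` at `(θ₀, w*(θ₀))`
    (H : Matrix (Fin p) (Fin p) ℝ)
    (hH : ∀ i j, H i j =
      fderiv ℝ (fun w => fderiv ℝ (fun w' => Ω (θ₀, w')) w (Pi.single j 1))
        (wstar θ₀) (Pi.single i 1))
    (hinv : IsUnit H.det)
    -- the mixed second partials matrix `∂²Ω/∂θ∂wᵀ` (q × p) at `(θ₀, w*(θ₀))`:
    -- entry `(j, i)` is `∂²Ω/∂θ_j ∂w_i`
    (A : Matrix (Fin q) (Fin p) ℝ)
    (hA : ∀ j i, A j i =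
      fderiv ℝ (fun θ => fderiv ℝ (fun w => Ω (θ, w)) (wstar θ₀) (Pi.single i 1))
        θ₀ (Pi.single j 1))
    -- the gradient of `Ψ` at `w*(θ₀)`
    (gradΨ : Fin p → ℝ)
    (hgradΨ : ∀ i, gradΨ i = fderiv ℝ Ψ (wstar θ₀) (Pi.single i 1)) :
    (fun j => fderiv ℝ (fun θ => Ψ (wstar θ)) θ₀ (Pi.single j 1)) =
      -((A * H⁻¹).mulVec gradΨ) := by
  have hΩd : Differentiable ℝ Ω := hΩ.differentiable two_ne_zero
  set w₀ := wstar θ₀ with hw₀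
  set D2 := fderiv ℝ (fderiv ℝ Ω) (θ₀, w₀) with hD2
  -- partial derivative in w as full derivative
  have partial_w : ∀ (θ : Fin q → ℝ) (w v : Fin p → ℝ),
      fderiv ℝ (fun w' => Ω (θ, w')) w v = fderiv ℝ Ω (θ, w) (0, v) := by
    intro θ w v
    exact aux_chain Ω hΩd (fun w' => (θ, w')) (hasFDerivAt_prodMk_right θ w) v
  -- Hessian entries in terms of D2
  have hHe : ∀ i j, H i j = D2 (0, Pi.single i 1) (0, Pi.single j 1) := by
    intro i j
    rw [hH i j]
    have heq : (fun w => fderiv ℝ (fun w' => Ω (θ₀, w')) w (Pi.single j 1))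
        = (fun w : Fin p → ℝ => fderiv ℝ Ω (θ₀, w) (0, Pi.single j 1)) := by
      funext w; exact partial_w θ₀ w _
    rw [heq]
    exact aux_fderiv_apply Ω hΩ (fun w : Fin p → ℝ => (θ₀, w))
      (hasFDerivAt_prodMk_right θ₀ w₀) _ _
  -- mixed entries in terms of D2
  have hAe : ∀ j i, A j i = D2 (Pi.single j 1, 0) (0, Pi.single i 1) := by
    intro j i
    rw [hA j i]
    have heq : (fun θ => fderiv ℝ (fun w => Ω (θ, w)) w₀ (Pi.single i 1))
        = (fun θ : Fin q → ℝ => fderiv ℝ Ω (θ, w₀) (0, Pi.single i 1)) := by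
      funext θ; exact partial_w θ w₀ _
    rw [heq]
    exact aux_fderiv_apply Ω hΩ (fun θ : Fin q → ℝ => (θ, w₀))
      (hasFDerivAt_prodMk_left θ₀ w₀) _ _
  -- differentiate the stationarity identity
  have hstat' : ∀ (i : Fin p) (v : Fin q → ℝ),
      D2 (v, fderiv ℝ wstar θ₀ v) (0, Pi.single i 1) = 0 := by
    intro i v
    have hγ : HasFDerivAt (fun θ : Fin q → ℝ => (θ, wstar θ))
        ((ContinuousLinearMap.id ℝ (Fin q → ℝ)).prod (fderiv ℝ wstar θ₀)) θ₀ :=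
      (hasFDerivAt_id θ₀).prodMk (hwstar θ₀).hasFDerivAt
    have h1 := aux_fderiv_apply Ω hΩ (fun θ : Fin q → ℝ => (θ, wstar θ)) hγ
      (0, Pi.single i 1) v
    have h0 : (fun θ : Fin q → ℝ => fderiv ℝ Ω (θ, wstar θ) (0, Pi.single i 1))
        = fun _ => (0 : ℝ) := by
      funext θ
      rw [← partial_w θ (wstar θ), hstat θ]
      simp
    rw [h0, fderiv_fun_const] at h1
    simpa using h1.symm
  -- the Jacobian of wstar
  set J : Matrix (Fin q) (Fin p) ℝ :=
    fun j k => fderiv ℝ wstar θ₀ (Pi.single j 1) k with hJ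
  -- expansion of D2 in second slot of first argument
  have expand : ∀ (b : Fin p → ℝ) (u : (Fin q → ℝ) × (Fin p → ℝ)),
      D2 (0, b) u = ∑ k, b k * D2 (0, Pi.single k 1) u := by
    intro b u
    have hb : ((0 : Fin q → ℝ), b)
        = ∑ k, b k • (((0 : Fin q → ℝ), (Pi.single k 1 : Fin p → ℝ))) := by
      have h2 := aux_pi_expand b
      rw [Prod.ext_iff]
      constructor
      · simp [Prod.fst_sum]
      · simpa [Prod.snd_sum] using h2
    rw [hb, map_sum, ContinuousLinearMap.sum_apply]
    congr 1; funext k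
    rw [map_smul]
    simp
  -- matrix identity J * H = -A
  have hJH : J * H = -A := by
    ext j i
    have h1 := hstat' i (Pi.single j 1)
    have hsplit : ((Pi.single j 1 : Fin q → ℝ), fderiv ℝ wstar θ₀ (Pi.single j 1))
        = ((Pi.single j 1 : Fin q → ℝ), (0 : Fin p → ℝ))
          + ((0 : Fin q → ℝ), fderiv ℝ wstar θ₀ (Pi.single j 1)) := by
      simp
    rw [hsplit, map_add, ContinuousLinearMap.add_apply, expand] at h1
    simp only [Matrix.mul_apply, Matrix.neg_apply]
    have hterm : ∀ k, J j k * H k i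
        = fderiv ℝ wstar θ₀ (Pi.single j 1) k
            * D2 (0, Pi.single k 1) (0, Pi.single i 1) := by
      intro k; rw [hJ, hHe]
    rw [Finset.sum_congr rfl (fun k _ => hterm k), hAe j i]
    linarith
  haveI : Invertible H := H.invertibleOfIsUnitDet hinv
  have hJeq : J = -(A * H⁻¹) := by
    calc J = J * H * H⁻¹ := (Matrix.mul_inv_cancel_right_of_invertible (A := H) J).symm
    _ = -A * H⁻¹ := by rw [hJH]
    _ = -(A * H⁻¹) := by rw [Matrix.neg_mul]
  -- the outer chain rule
  funext j
  have hchain : fderiv ℝ (fun θ => Ψ (wstar θ)) θ₀ (Pi.single j 1)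
      = fderiv ℝ Ψ w₀ (fderiv ℝ wstar θ₀ (Pi.single j 1)) :=
    aux_chain Ψ hΨ wstar (hwstar θ₀).hasFDerivAt _
  have hexp : fderiv ℝ Ψ w₀ (fderiv ℝ wstar θ₀ (Pi.single j 1))
      = ∑ i, J j i * gradΨ i := by
    rw [show fderiv ℝ wstar θ₀ (Pi.single j 1)
        = ∑ k, J j k • (Pi.single k 1 : Fin p → ℝ) from aux_pi_expand _]
    rw [map_sum]
    congr 1; funext i
    rw [map_smul]
    simp [hgradΨ]
  rw [hchain, hexp, show (∑ i, J j i * gradΨ i) = J.mulVec gradΨ j from rfl, hJeq]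
  simp [Matrix.neg_mulVec]
end

section
/- Let X be a set, m ≥ 1, f : X → ℝ^m a vector of m objective functions, and z ∈ ℝ^m a utopian reference point satisfying z_i < f_i(x) for all x ∈ X and all i. If x* ∈ X is weakly Pareto optimal, then there exists a preference vector w in the simplex (w_i > 0 for every i and Σ_{i=1}^m w_i = 1), namely w_i proportional to 1/(f_i(x*) − z_i), such that x* minimizes the weighted-Tchebycheff scalarization Ω_tch(x, w, z) = max_{i ∈ {1,…,m}} w_i |f_i(x) − z_i| over X. -/
/-! With `w_i = c / (f_i(x*) - z_i)` every term of `Ω_tch(x*, w, z)` equals `c`, so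
`Ω_tch(x*, w, z) = c`. For any `x`, weak Pareto optimality of `x*` gives an index `i` with
`f_i(x*) ≤ f_i(x)`, and that single term already gives `Ω_tch(x, w, z) ≥ c`. -/

open Finset

section Tchebycheff

variable {ι : Type*}

noncomputable def tchebycheff (w z y : ι → ℝ) : ℝ :=
  ⨆ i, w i * |y i - z i|

lemma le_tchebycheff [Finite ι] (w z y : ι → ℝ) (i : ι) :
    w i * |y i - z i| ≤ tchebycheff w z y :=
  le_ciSup (f := fun i => w i * |y i - z i|) (Set.finite_range _).bddAbove i

lemma tchebycheff_inverse_weights_self [Nonempty ι] (c : ℝ) {z y : ι → ℝ}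
    (hzy : ∀ i, z i < y i) : tchebycheff (fun i => c / (y i - z i)) z y = c := by
  have hterm : ∀ i, c / (y i - z i) * |y i - z i| = c := fun i => by
    rw [abs_of_pos (sub_pos.2 (hzy i)), div_mul_cancel₀ _ (sub_pos.2 (hzy i)).ne']
  simp only [tchebycheff, hterm, ciSup_const]

lemma le_tchebycheff_inverse_weights [Finite ι] {c : ℝ} (hc : 0 ≤ c) {z y y' : ι → ℝ}
    (hzy : ∀ i, z i < y i) {i : ι} (hi : y i ≤ y' i) :
    c ≤ tchebycheff (fun i => c / (y i - z i)) z y' := by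
  have hd : 0 < y i - z i := sub_pos.2 (hzy i)
  calc c = c / (y i - z i) * (y i - z i) := (div_mul_cancel₀ _ hd.ne').symm
    _ ≤ c / (y i - z i) * |y' i - z i| := by
        gcongr
        exact (sub_le_sub_right hi _).trans (le_abs_self _)
    _ ≤ tchebycheff (fun i => c / (y i - z i)) z y' :=
        le_tchebycheff (fun i => c / (y i - z i)) z y' i

end Tchebycheff

lemma sum_inv_sum_inv_div_eq_one {ι : Type*} [Fintype ι] {d : ι → ℝ}
    (hd : ∑ i, (d i)⁻¹ ≠ 0) : ∑ i, (∑ j, (d j)⁻¹)⁻¹ / d i = 1 := by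
  simp only [div_eq_mul_inv, ← mul_sum]
  exact inv_mul_cancel₀ hd

/-- If `x*` is weakly Pareto optimal and `z` is a utopian
reference point (`z_i < f_i(x)` for all `x, i`), then there exists a
preference vector `w` in the simplex (with `w_i > 0` and `Σ_i w_i = 1`),
namely `w_i` proportional to `1 / (f_i(x*) − z_i)`, such that `x*`
minimizes the weighted-Tchebycheff scalarization
`Ω_tch(x, w, z) = max_i w_i |f_i(x) − z_i|` over `X`. -/
theorem weakly_pareto_optimal_is_tchebycheff_min
    {X : Type*} (m : ℕ) (hm : 1 ≤ m)
    (f : X → Fin m → ℝ) (z : Fin m → ℝ)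
    (hz : ∀ (x : X) (i : Fin m), z i < f x i)
    (xstar : X)
    (hpareto : ¬ ∃ x : X, ∀ i, f x i < f xstar i) :
    ∃ w : Fin m → ℝ,
      (∀ i, 0 < w i) ∧
      (∑ i, w i) = 1 ∧
      (∃ c : ℝ, 0 < c ∧ ∀ i, w i = c / (f xstar i - z i)) ∧
      ∀ x : X, (⨆ i, w i * |f xstar i - z i|) ≤ ⨆ i, w i * |f x i - z i| := by
  have : Nonempty (Fin m) := ⟨⟨0, hm⟩⟩
  have hd : ∀ i, 0 < f xstar i - z i := fun i => sub_pos.2 (hz xstar i)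
  have hsum : 0 < ∑ i, (f xstar i - z i)⁻¹ :=
    sum_pos (fun i _ => inv_pos.2 (hd i)) univ_nonempty
  refine ⟨fun i => (∑ j, (f xstar j - z j)⁻¹)⁻¹ / (f xstar i - z i),
    fun i => div_pos (inv_pos.2 hsum) (hd i), sum_inv_sum_inv_div_eq_one hsum.ne',
    ⟨_, inv_pos.2 hsum, fun _ => rfl⟩, fun x => ?_⟩
  obtain ⟨i, hi⟩ : ∃ i, f xstar i ≤ f x i := by
    simpa only [not_forall, not_lt] using not_exists.mp hpareto x
  change tchebycheff _ z (f xstar) ≤ tchebycheff _ z (f x)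
  rw [tchebycheff_inverse_weights_self _ (hz xstar)]
  exact le_tchebycheff_inverse_weights (inv_pos.2 hsum).le (hz xstar) hi
end

section
/- Let X be a set, m ≥ 1, f : X → ℝ^m a vector of m objective functions, z ∈ ℝ^m a utopian reference point satisfying z_i < f_i(x) for all x ∈ X and all i, x* ∈ X, and let w ∈ ℝ^m be the weight vector with w_i = c/(f_i(x*) − z_i) for the normalizing constant c > 0 making Σ_{i=1}^m w_i = 1 (so that w_i (f_i(x*) − z_i) = c for every i). If x ∈ X satisfies Ω_tch(x, w, z) ≤ Ω_tch(x*, w, z) + ε for some ε ≥ 0, where Ω_tch(x, w, z) = max_{i ∈ {1,…,m}} w_i |f_i(x) − z_i|, then f_i(x) ≤ f_i(x*) + ε / w_i for every i ∈ {1,…,m}. -/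
/-!
At `x*` every weighted gap `w i * (f x* i - z i)` equals `c`, so the Tchebycheff value of `x*`
is `c`. The `i`-th weighted gap of `x` is bounded by its Tchebycheff value, hence by `c + ε`,
i.e. by `w i * (f x* i - z i) + ε`; dividing by `w i > 0` gives the claim.
-/

theorem ciSup_div_mul_abs_eq {ι : Type*} [Nonempty ι] (d : ι → ℝ) (hd : ∀ i, 0 < d i) (c : ℝ) :
    ⨆ i, c / d i * |d i| = c := by
  simp_rw [abs_of_pos (hd _), div_mul_cancel₀ _ (hd _).ne', ciSup_const]

theorem le_add_div_of_mul_sub_le {w a b z ε : ℝ} (hw : 0 < w)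
    (h : w * (a - z) ≤ w * (b - z) + ε) : a ≤ b + ε / w := by
  have : a - b ≤ ε / w := (le_div_iff₀ hw).2 (by linarith)
  linarith

theorem tchebycheff_eps_min_approx_dominates_general
    {X : Type*} (m : ℕ)
    (f : X → Fin m → ℝ) (z : Fin m → ℝ)
    (hz : ∀ (x : X) (i : Fin m), z i < f x i)
    (xstar : X)
    (c : ℝ) (hc : 0 < c)
    (w : Fin m → ℝ)
    (hw : ∀ i, w i = c / (f xstar i - z i))
    (ε : ℝ)
    (x : X)
    (hx : (⨆ i, w i * |f x i - z i|) ≤ (⨆ i, w i * |f xstar i - z i|) + ε) :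
    ∀ i, f x i ≤ f xstar i + ε / w i := by
  intro i
  have : Nonempty (Fin m) := ⟨i⟩
  have hgap : ∀ j, 0 < f xstar j - z j := fun j => sub_pos.2 (hz xstar j)
  have hwi : 0 < w i := hw i ▸ div_pos hc (hgap i)
  have hstar : ⨆ j, w j * |f xstar j - z j| = c := by
    simp_rw [hw]
    exact ciSup_div_mul_abs_eq _ hgap c
  have hwstar : w i * (f xstar i - z i) = c := by
    rw [hw i, div_mul_cancel₀ _ (hgap i).ne']
  apply le_add_div_of_mul_sub_le hwi
  calc w i * (f x i - z i) ≤ w i * |f x i - z i| := by gcongr; exact le_abs_self _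
    _ ≤ ⨆ j, w j * |f x j - z j| := le_ciSup (Finite.bddAbove_range fun j => w j * |f x j - z j|) i
    _ ≤ c + ε := hstar ▸ hx
    _ = w i * (f xstar i - z i) + ε := by rw [hwstar]

/-- With a utopian reference point `z` (`z_i < f_i(x)` for all
`x, i`) and the weight vector `w_i = c / (f_i(x*) − z_i)` for the normalizing
constant `c > 0` making `Σ_i w_i = 1`, if `x` is an `ε`-approximate minimizer
of the Tchebycheff scalarization relative to `x*`, i.e.
`Ω_tch(x, w, z) ≤ Ω_tch(x*, w, z) + ε` with `ε ≥ 0`, then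
`f_i(x) ≤ f_i(x*) + ε / w_i` for every `i`. -/
theorem tchebycheff_eps_min_approx_dominates
    {X : Type*} (m : ℕ) (hm : 1 ≤ m)
    (f : X → Fin m → ℝ) (z : Fin m → ℝ)
    (hz : ∀ (x : X) (i : Fin m), z i < f x i)
    (xstar : X)
    (c : ℝ) (hc : 0 < c)
    (w : Fin m → ℝ)
    (hw : ∀ i, w i = c / (f xstar i - z i))
    (hwsum : (∑ i, w i) = 1)
    (ε : ℝ) (hε : 0 ≤ ε)
    (x : X)
    (hx : (⨆ i, w i * |f x i - z i|) ≤ (⨆ i, w i * |f xstar i - z i|) + ε) :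
    ∀ i, f x i ≤ f xstar i + ε / w i :=
  tchebycheff_eps_min_approx_dominates_general m f z hz xstar c hc w hw ε x hx
end

section
/- Let X be a set, m ≥ 1, f : X → ℝ^m a vector of m objective functions, z ∈ ℝ^m a utopian reference point satisfying z_i < f_i(x) for all x ∈ X and all i, and ε > 0. Suppose S ⊆ X is a set of generated solutions such that for every preference vector w in the simplex with w_i > 0 for all i, there exists x ∈ S with Ω_tch(x, w, z) ≤ inf_{x' ∈ X} Ω_tch(x', w, z) + ε · min_{i ∈ {1,…,m}} w_i, where Ω_tch(x, w, z) = max_{i ∈ {1,…,m}} w_i |f_i(x) − z_i|. Then S is an ε-approximate Pareto set: for every weakly Pareto optimal x* ∈ X there exists x ∈ S such that f_i(x) ≤ f_i(x*) + ε for every i ∈ {1,…,m}. -/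
/-- If, for every preference vector `w` in the simplex with
strictly positive entries, the set `S` of generated solutions contains an
`ε · min_i w_i`-approximate minimizer of the weighted-Tchebycheff
scalarization `Ω_tch(x, w, z) = max_i w_i |f_i(x) − z_i|` (with utopian
reference point `z`, i.e. `z_i < f_i(x)` for all `x, i`), then `S` is an
`ε`-approximate Pareto set: every weakly Pareto optimal `x*` is
`ε`-dominated by some `x ∈ S`. -/
theorem tchebycheff_eps_solutions_give_eps_pareto_set
    {X : Type*} (m : ℕ) (hm : 1 ≤ m)
    (f : X → Fin m → ℝ) (z : Fin m → ℝ)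
    (hz : ∀ (x : X) (i : Fin m), z i < f x i)
    (ε : ℝ) (hε : 0 < ε)
    (S : Set X)
    (hS : ∀ w : Fin m → ℝ, (∀ i, 0 < w i) → (∑ i, w i) = 1 →
      ∃ x ∈ S, (⨆ i, w i * |f x i - z i|) ≤
        (⨅ x' : X, ⨆ i, w i * |f x' i - z i|) + ε * ⨅ i, w i) :
    ∀ xstar : X, (¬ ∃ x : X, ∀ i, f x i < f xstar i) →
      ∃ x ∈ S, ∀ i, f x i ≤ f xstar i + ε := by
  intro xstar _hpareto
  haveI : Nonempty (Fin m) := ⟨⟨0, hm⟩⟩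
  haveI : Nonempty X := ⟨xstar⟩
  set d : Fin m → ℝ := fun i => f xstar i - z i with hd
  have hdpos : ∀ i, 0 < d i := fun i => sub_pos.mpr (hz xstar i)
  set T : ℝ := ∑ i, (d i)⁻¹ with hT
  have hTpos : 0 < T := Finset.sum_pos (fun i _ => inv_pos.mpr (hdpos i)) Finset.univ_nonempty
  set w : Fin m → ℝ := fun i => (d i)⁻¹ / T with hw
  have hwpos : ∀ i, 0 < w i := fun i => div_pos (inv_pos.mpr (hdpos i)) hTpos
  have hwsum : (∑ i, w i) = 1 := by
    simp only [hw, div_eq_mul_inv, ← Finset.sum_mul]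
    exact mul_inv_cancel₀ hTpos.ne'
  have hwd : ∀ i, w i * d i = T⁻¹ := by
    intro i
    field_simp [hw, (hdpos i).ne']
    simp only [hw]
    field_simp [(hdpos i).ne', hTpos.ne']
  obtain ⟨x, hxS, hx⟩ := hS w hwpos hwsum
  refine ⟨x, hxS, fun i => ?_⟩
  -- bounds on sup/inf
  have habs : ∀ (x' : X) (j : Fin m), w j * |f x' j - z j| = w j * (f x' j - z j) := by
    intro x' j
    rw [abs_of_pos (sub_pos.mpr (hz x' j))]
  have hbdd : ∀ j : Fin m, w j ≥ ⨅ k, w k := by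
    intro j
    exact ciInf_le (Set.Finite.bddBelow (Set.finite_range w)) j
  -- sup at xstar equals T⁻¹
  have hsupstar : (⨆ j, w j * |f xstar j - z j|) = T⁻¹ := by
    have : ∀ j, w j * |f xstar j - z j| = T⁻¹ := by
      intro j; rw [habs]; exact hwd j
    simp only [this, ciSup_const]
  have hinf_le : (⨅ x' : X, ⨆ j, w j * |f x' j - z j|) ≤ T⁻¹ := by
    rw [← hsupstar]
    exact ciInf_le ⟨0, by
      rintro _ ⟨x', rfl⟩
      refine le_ciSup_of_le (Set.Finite.bddAbove (Set.finite_range _)) ⟨0, hm⟩ ?_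
      rw [habs]
      exact le_of_lt (mul_pos (hwpos _) (sub_pos.mpr (hz x' _)))⟩ xstar
  have hterm : w i * (f x i - z i) ≤ (⨆ j, w j * |f x j - z j|) := by
    rw [← habs]
    exact le_ciSup (Set.Finite.bddAbove (Set.finite_range (fun j => w j * |f x j - z j|))) i
  have key : w i * (f x i - z i) ≤ T⁻¹ + ε * w i := by
    calc w i * (f x i - z i) ≤ (⨅ x' : X, ⨆ j, w j * |f x' j - z j|) + ε * ⨅ k, w k :=
          hterm.trans hx
      _ ≤ T⁻¹ + ε * w i := by
          have h1 : ε * (⨅ k, w k) ≤ ε * w i :=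
            mul_le_mul_of_nonneg_left (hbdd i) hε.le
          exact add_le_add hinf_le h1
  have hTi : T⁻¹ = w i * d i := (hwd i).symm
  rw [hTi] at key
  have := (mul_le_mul_iff_right₀ (hwpos i)).mp (by linarith [key] : w i * (f x i - z i) ≤ w i * (d i + ε))
  have : f x i - z i ≤ d i + ε := this
  simp only [hd] at this
  linarith
end
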